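/- Let n ≥ 2, let d ≥ 1, let 1 ≤ k ≤ n, and let e : Fin n → EuclideanSpace ℝ (Fin d) be a closed equilateral polygon of length 2, i.e. ∑ j, e j = 0 and ‖e j‖ = 2/n for every j. Then the average over all n! permutations σ of Fin n of the squared length of the chord skipping the first k edges satisfies (1/n!) · ∑_{σ ∈ Perm(Fin n)} ‖∑_{j=0}^{k-1} e (σ j)‖² = ((n−k)/(n−1)) · (4k/n²). -/

import Mathlib

/-!
Expanding the squared chord, the sum over permutations `σ` of `⟪e (σ x), e (σ y)⟫` depends only
on whether `x = y`, since permutations act 2-transitively. On the diagonal it is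
`D = ∑ σ, ‖e (σ a)‖ ^ 2`; off the diagonal it is `-D / (n - 1)`, because pairing `e (σ x)` with
all edges gives `⟪e (σ x), ∑ e⟫ = 0`. A chord of `k` edges therefore averages
`k D - k (k - 1) D / (n - 1) = k (n - k) D / (n - 1)`, and `D = n! (2 / n) ^ 2` for an
equilateral polygon.
-/

open Finset Equiv
open scoped RealInnerProductSpace

section PermSums

variable {ι M : Type*} [Fintype ι] [DecidableEq ι] [AddCommMonoid M]

lemma Equiv.Perm.sum_apply_eq_sum_apply (f : ι → M) (a a' : ι) :
    ∑ σ : Perm ι, f (σ a) = ∑ σ : Perm ι, f (σ a') :=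
  Fintype.sum_equiv (Equiv.mulRight (swap a a')) _ _ (by simp)

lemma Equiv.Perm.sum_apply_pair_eq_sum_apply_pair (F : ι → ι → M) {a b a' b' : ι}
    (hab : a ≠ b) (hab' : a' ≠ b') :
    ∑ σ : Perm ι, F (σ a) (σ b) = ∑ σ : Perm ι, F (σ a') (σ b') := by
  obtain ⟨π, ha, hb⟩ :=
    MulAction.is_two_pretransitive_iff.mp (Perm.isMultiplyPretransitive ι 2) hab' hab
  rw [Perm.smul_def] at ha hb
  exact Fintype.sum_equiv (Equiv.mulRight π) _ _ (by simp [ha, hb])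

end PermSums

section ChordSums

variable {ι κ E : Type*} [Fintype ι] [DecidableEq ι] [Fintype κ]
  [NormedAddCommGroup E] [InnerProductSpace ℝ E]

lemma card_sub_one_mul_sum_perm_inner_of_ne {e : ι → E} (hclosed : ∑ j, e j = 0) {a b : ι}
    (hab : a ≠ b) :
    ((Fintype.card ι : ℝ) - 1) * ∑ σ : Perm ι, ⟪e (σ a), e (σ b)⟫
      = -∑ σ : Perm ι, ‖e (σ a)‖ ^ 2 := by
  have hrow : ∑ c, ∑ σ : Perm ι, ⟪e (σ a), e (σ c)⟫ = 0 := by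
    rw [Finset.sum_comm]
    refine Finset.sum_eq_zero fun σ _ => ?_
    rw [← inner_sum, Equiv.sum_comp σ e, hclosed, inner_zero_right]
  have hoff : ∀ c ∈ ({a}ᶜ : Finset ι),
      ∑ σ : Perm ι, ⟪e (σ a), e (σ c)⟫ = ∑ σ : Perm ι, ⟪e (σ a), e (σ b)⟫ := fun c hc =>
    Perm.sum_apply_pair_eq_sum_apply_pair (fun x y => ⟪e x, e y⟫) (by simpa [eq_comm] using hc)
      hab
  rw [Fintype.sum_eq_add_sum_compl a, Finset.sum_congr rfl hoff, Finset.sum_const,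
    Finset.card_compl, Finset.card_singleton, nsmul_eq_mul] at hrow
  simp only [real_inner_self_eq_norm_sq] at hrow
  have hcard : 1 ≤ Fintype.card ι := Fintype.card_pos_iff.mpr ⟨a⟩
  push_cast [Nat.cast_sub hcard] at hrow
  linear_combination hrow

lemma card_sub_one_mul_sum_perm_inner (e : ι → E) (hclosed : ∑ j, e j = 0) (a x y : ι) :
    ((Fintype.card ι : ℝ) - 1) * ∑ σ : Perm ι, ⟪e (σ x), e (σ y)⟫
      = if x = y then ((Fintype.card ι : ℝ) - 1) * ∑ σ : Perm ι, ‖e (σ a)‖ ^ 2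
        else -∑ σ : Perm ι, ‖e (σ a)‖ ^ 2 := by
  have hdiag := Perm.sum_apply_eq_sum_apply (fun z => ‖e z‖ ^ 2) x a
  split_ifs with hxy
  · subst hxy
    simp only [real_inner_self_eq_norm_sq, hdiag]
  · rw [card_sub_one_mul_sum_perm_inner_of_ne hclosed hxy, hdiag]

theorem card_sub_one_mul_sum_perm_norm_sq_sum (e : ι → E) (hclosed : ∑ j, e j = 0)
    {f : κ → ι} (hf : Function.Injective f) (a : ι) :
    ((Fintype.card ι : ℝ) - 1) * ∑ σ : Perm ι, ‖∑ j, e (σ (f j))‖ ^ 2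
      = Fintype.card κ * (Fintype.card ι - Fintype.card κ) * ∑ σ : Perm ι, ‖e (σ a)‖ ^ 2 := by
  classical
  set D := ∑ σ : Perm ι, ‖e (σ a)‖ ^ 2
  have hgram : ∀ i j, ((Fintype.card ι : ℝ) - 1) * ∑ σ : Perm ι, ⟪e (σ (f i)), e (σ (f j))⟫
      = -D + if i = j then Fintype.card ι * D else 0 := fun i j => by
    simp only [card_sub_one_mul_sum_perm_inner e hclosed a, hf.eq_iff]
    split_ifs <;> ring
  calc ((Fintype.card ι : ℝ) - 1) * ∑ σ : Perm ι, ‖∑ j, e (σ (f j))‖ ^ 2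
      = ∑ i, ∑ j, ((Fintype.card ι : ℝ) - 1) * ∑ σ : Perm ι, ⟪e (σ (f i)), e (σ (f j))⟫ := by
        simp_rw [← real_inner_self_eq_norm_sq, sum_inner, inner_sum, Finset.mul_sum]
        rw [Finset.sum_comm]
        exact Finset.sum_congr rfl fun i _ => Finset.sum_comm
    _ = _ := by
        simp only [hgram, Finset.sum_add_distrib, Finset.sum_const, Finset.card_univ,
          Finset.sum_ite_eq, Finset.mem_univ, if_true, nsmul_eq_mul]
        ring

end ChordSums

theorem sChord_closed_equilateral_general (n d k : ℕ) (hn : 2 ≤ n)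
    (hkn : k ≤ n) (e : Fin n → EuclideanSpace ℝ (Fin d))
    (hclosed : ∑ j, e j = 0) (hequi : ∀ j, ‖e j‖ = 2 / n) :
    (1 / (n.factorial : ℝ)) *
        ∑ σ : Equiv.Perm (Fin n), ‖∑ j : Fin k, e (σ (Fin.castLE hkn j))‖ ^ 2
      = (((n : ℝ) - k) / ((n : ℝ) - 1)) * (4 * (k : ℝ) / (n : ℝ) ^ 2) := by
  have hchord := card_sub_one_mul_sum_perm_norm_sq_sum e hclosed (Fin.castLE_injective hkn)
    ⟨0, by omega⟩
  have hedge : ∑ σ : Perm (Fin n), ‖e (σ ⟨0, by omega⟩)‖ ^ 2 = n.factorial * (2 / n) ^ 2 := by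
    simp [hequi, Fintype.card_perm]
  have hn1 : (n : ℝ) - 1 ≠ 0 := by
    have : (2 : ℝ) ≤ n := by exact_mod_cast hn
    linarith
  have hn0 : (n : ℝ) ≠ 0 := by positivity
  rw [hedge, Fintype.card_fin, Fintype.card_fin, mul_comm, ← eq_div_iff hn1] at hchord
  rw [hchord]
  field_simp
  ring

/-- For a closed equilateral polygon of length 2 (edges of length `2/n` summing to zero), the
average over all rearrangements of the squared length of the chord skipping the first `k`
edges is `((n−k)/(n−1))·(4k/n²)`. -/
theorem sChord_closed_equilateral (n d k : ℕ) (hn : 2 ≤ n) (hd : 1 ≤ d) (hk1 : 1 ≤ k)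
    (hkn : k ≤ n) (e : Fin n → EuclideanSpace ℝ (Fin d))
    (hclosed : ∑ j, e j = 0) (hequi : ∀ j, ‖e j‖ = 2 / n) :
    (1 / (n.factorial : ℝ)) *
        ∑ σ : Equiv.Perm (Fin n), ‖∑ j : Fin k, e (σ (Fin.castLE hkn j))‖ ^ 2
      = (((n : ℝ) - k) / ((n : ℝ) - 1)) * (4 * (k : ℝ) / (n : ℝ) ^ 2) :=
  sChord_closed_equilateral_general n d k hn hkn e hclosed hequi
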